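/- Let X and Y be completely regular Hausdorff (Tychonoff) spaces and let f : X → Y be a continuous mapping. Then f induces an order-homomorphism φ : (ℋ(Y), ⊆) → (ℋ(X), ⊆) (i.e., an order-preserving map from the poset of non-vanishing closed ideals of C_B(Y) to that of C_B(X)), and φ is injective whenever f is surjective. -/
import Mathlib


open BoundedContinuousFunction Set Filter Topology

section Preamble

variable {X : Type*} [TopologicalSpace X] {𝕜 : Type*} [RCLike 𝕜]

theorem betaExt_aux (f : X →ᵇ 𝕜) :
    Continuous (fun x => (⟨f x, by
      simpa [Metric.mem_closedBall, dist_zero_right] using f.norm_coe_le_norm x⟩ :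
        Metric.closedBall (0 : 𝕜) ‖f‖)) :=
  f.continuous.subtype_mk _

/-- `f_β`, the unique continuous extension of a bounded continuous function `f : X → 𝕜` to the
Stone–Čech compactification `βX`. -/
noncomputable def betaExt (f : X →ᵇ 𝕜) : StoneCech X → 𝕜 :=
  haveI : CompactSpace (Metric.closedBall (0 : 𝕜) ‖f‖) :=
    isCompact_iff_compactSpace.mp (isCompact_closedBall 0 ‖f‖)
  fun p => (stoneCechExtend (betaExt_aux f) p).1

theorem betaExt_unit (f : X →ᵇ 𝕜) (x : X) : betaExt f (stoneCechUnit x) = f x := by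
  haveI : CompactSpace (Metric.closedBall (0 : 𝕜) ‖f‖) :=
    isCompact_iff_compactSpace.mp (isCompact_closedBall 0 ‖f‖)
  exact congrArg Subtype.val (congrFun (stoneCechExtend_extends (betaExt_aux f)) x)

theorem continuous_betaExt (f : X →ᵇ 𝕜) : Continuous (betaExt f) := by
  haveI : CompactSpace (Metric.closedBall (0 : 𝕜) ‖f‖) :=
    isCompact_iff_compactSpace.mp (isCompact_closedBall 0 ‖f‖)
  exact continuous_subtype_val.comp (continuous_stoneCechExtend _)

/-- `λ_G X`, the union over `g ∈ G` of the cozero-sets in `βX` of the extensions `g_β`. -/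
def lambdaSet (G : Ideal (X →ᵇ 𝕜)) : Set (StoneCech X) :=
  ⋃ g ∈ G, {p | betaExt g p ≠ 0}

end Preamble

section ExtraLemmas

variable {X : Type*} [TopologicalSpace X] {𝕜 : Type*} [RCLike 𝕜]

-- new lemmas
theorem betaExt_unique {f : X →ᵇ 𝕜} {a : StoneCech X → 𝕜} (ha : Continuous a)
    (h : ∀ x, a (stoneCechUnit x) = f x) : betaExt f = a :=
  stoneCech_hom_ext (continuous_betaExt f) ha
    (funext fun x => by simp [Function.comp, betaExt_unit, h])

theorem betaExt_norm_le (f : X →ᵇ 𝕜) (p : StoneCech X) : ‖betaExt f p‖ ≤ ‖f‖ := by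
  haveI : CompactSpace (Metric.closedBall (0 : 𝕜) ‖f‖) :=
    isCompact_iff_compactSpace.mp (isCompact_closedBall 0 ‖f‖)
  have h2 := (stoneCechExtend (betaExt_aux f) p).2
  rw [Metric.mem_closedBall, dist_zero_right] at h2
  exact h2

theorem betaExt_zero : betaExt (0 : X →ᵇ 𝕜) = 0 :=
  betaExt_unique continuous_const (fun x => by simp)

theorem betaExt_add (f g : X →ᵇ 𝕜) : betaExt (f + g) = betaExt f + betaExt g :=
  betaExt_unique ((continuous_betaExt f).add (continuous_betaExt g))
    (fun x => by simp [betaExt_unit])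

theorem betaExt_mul (f g : X →ᵇ 𝕜) : betaExt (f * g) = betaExt f * betaExt g :=
  betaExt_unique ((continuous_betaExt f).mul (continuous_betaExt g))
    (fun x => by simp [betaExt_unit])

theorem betaExt_sub (f g : X →ᵇ 𝕜) : betaExt (f - g) = betaExt f - betaExt g :=
  betaExt_unique ((continuous_betaExt f).sub (continuous_betaExt g))
    (fun x => by simp [betaExt_unit])


end ExtraLemmas

theorem le_of_lambdaSet_subset {Y : Type*} [TopologicalSpace Y] {𝕜 : Type*} [RCLike 𝕜]
    {H H' : Ideal (Y →ᵇ 𝕜)} (hc : IsClosed (H' : Set (Y →ᵇ 𝕜)))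
    (hl : lambdaSet H ⊆ lambdaSet H') : H ≤ H' := by
  intro h hh
  have : h ∈ closure (H' : Set (Y →ᵇ 𝕜)) := by
    rw [Metric.mem_closure_iff]
    intro ε hε
    have hε2 : 0 < ε / 2 := by linarith
    set K : Set (StoneCech Y) := {p | ε / 2 ≤ ‖betaExt h p‖} with hKdef
    have hKc : IsCompact K :=
      (isClosed_le continuous_const ((continuous_betaExt h).norm)).isCompact
    have hKsub : K ⊆ ⋃ g : H', {p | betaExt (g : Y →ᵇ 𝕜) p ≠ 0} := by
      intro p hp
      have hne : betaExt h p ≠ 0 := by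
        intro e
        rw [hKdef] at hp
        simp only [mem_setOf_eq, e, norm_zero] at hp
        linarith
      have hpl : p ∈ lambdaSet H := mem_biUnion hh hne
      rcases mem_iUnion₂.mp (hl hpl) with ⟨g, hg, hgp⟩
      exact mem_iUnion.mpr ⟨⟨g, hg⟩, hgp⟩
    obtain ⟨t, ht⟩ := hKc.elim_finite_subcover _
      (fun g : H' => (isOpen_compl_singleton (x := (0:𝕜))).preimage (continuous_betaExt _))
      hKsub
    -- r : continuous nonneg function on βY, positive on K
    set r : StoneCech Y → ℝ := fun p => ∑ g ∈ t, ‖betaExt (g : Y →ᵇ 𝕜) p‖ ^ 2 with hrdef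
    have hrcont : Continuous r :=
      continuous_finset_sum _ fun g _ => ((continuous_betaExt _).norm).pow 2
    have hrnonneg : ∀ p, 0 ≤ r p := fun p => Finset.sum_nonneg fun g _ => by positivity
    have hrK : ∀ p ∈ K, 0 < r p := by
      intro p hp
      rcases mem_iUnion₂.mp (ht hp) with ⟨g, hg, hgp⟩
      exact Finset.sum_pos' (fun g _ => by positivity)
        ⟨g, hg, by
          have h0 : 0 < ‖betaExt (g : Y →ᵇ 𝕜) p‖ := norm_pos_iff.mpr hgp
          positivity⟩
    obtain ⟨c, hc0, hcK⟩ : ∃ c > 0, ∀ p ∈ K, c ≤ r p := by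
      rcases K.eq_empty_or_nonempty with he | hne
      · exact ⟨1, one_pos, by simp [he]⟩
      · obtain ⟨p0, hp0, hmin⟩ := hKc.exists_isMinOn hne hrcont.continuousOn
        exact ⟨r p0, hrK p0 hp0, fun p hp => hmin hp⟩
    -- s on Y
    set s : Y → ℝ := fun y => r (stoneCechUnit y) with hsdef
    have hsnonneg : ∀ y, 0 ≤ s y := fun y => hrnonneg _
    -- q ∈ H'
    set q : Y →ᵇ 𝕜 := ∑ g ∈ t, star (g : Y →ᵇ 𝕜) * (g : Y →ᵇ 𝕜) with hqdef
    have hqmem : q ∈ H' := Ideal.sum_mem _ fun g _ => H'.mul_mem_left _ g.2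
    have hqval : ∀ y, q y = ((s y : ℝ) : 𝕜) := by
      intro y
      have h1 : q y = ∑ g ∈ t, (starRingEnd 𝕜) ((g : Y →ᵇ 𝕜) y) * (g : Y →ᵇ 𝕜) y := by
        rw [hqdef]
        rw [BoundedContinuousFunction.coe_sum, Finset.sum_apply]
        rfl
      rw [h1, hsdef]
      simp only [hrdef, betaExt_unit]
      push_cast
      exact Finset.sum_congr rfl fun g _ => RCLike.conj_mul _
    -- parameter T
    set T : ℝ := ‖h‖ / (ε / 2 * c) with hTdef
    have hT0 : 0 ≤ T := div_nonneg (norm_nonneg h) (by positivity)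
    have hd0 : ∀ y, (0:ℝ) < T * s y + 1 := fun y => by
      have := mul_nonneg hT0 (hsnonneg y); linarith
    have hdne : ∀ y, ((T * s y + 1 : ℝ) : 𝕜) ≠ 0 := fun y => by
      simp only [ne_eq, RCLike.ofReal_eq_zero]
      exact ne_of_gt (hd0 y)
    -- u
    have hucont : Continuous fun y => (T : 𝕜) * h y / ((T * s y + 1 : ℝ) : 𝕜) :=
      (continuous_const.mul h.continuous).div
        (RCLike.continuous_ofReal.comp
          ((continuous_const.mul (hrcont.comp continuous_stoneCechUnit)).add continuous_const))
        fun y => hdne y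
    set u : Y →ᵇ 𝕜 := BoundedContinuousFunction.ofNormedAddCommGroup _ hucont (T * ‖h‖)
      (by
        intro y
        rw [norm_div]
        have h1 : ‖(T : 𝕜) * h y‖ ≤ T * ‖h‖ := by
          rw [norm_mul, RCLike.norm_ofReal, abs_of_nonneg hT0]
          exact mul_le_mul_of_nonneg_left (h.norm_coe_le_norm y) hT0
        have h2 : (1:ℝ) ≤ ‖((T * s y + 1 : ℝ) : 𝕜)‖ := by
          rw [RCLike.norm_ofReal, abs_of_pos (hd0 y)]
          have := mul_nonneg hT0 (hsnonneg y); linarith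
        calc ‖(T : 𝕜) * h y‖ / ‖((T * s y + 1 : ℝ) : 𝕜)‖
            ≤ ‖(T : 𝕜) * h y‖ / 1 := by
              apply div_le_div_of_nonneg_left ?_ ?_ h2 <;> first | exact norm_nonneg _ | linarith
          _ ≤ T * ‖h‖ := by simpa using h1) with hudef
    have huval : ∀ y, u y = (T : 𝕜) * h y / ((T * s y + 1 : ℝ) : 𝕜) := fun y => rfl
    refine ⟨u * q, H'.mul_mem_left u hqmem, ?_⟩
    rw [dist_eq_norm]
    have hbound : ‖h - u * q‖ ≤ ε / 2 := by
      apply (BoundedContinuousFunction.norm_le hε2.le).mpr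
      intro y
      have key : (h - u * q) y = h y / ((T * s y + 1 : ℝ) : 𝕜) := by
        simp only [BoundedContinuousFunction.coe_sub, BoundedContinuousFunction.coe_mul,
          Pi.sub_apply, Pi.mul_apply]
        rw [huval y, hqval y, div_mul_eq_mul_div, eq_div_iff (hdne y), sub_mul,
          div_mul_cancel₀ _ (hdne y)]
        push_cast
        ring
      rw [key, norm_div, RCLike.norm_ofReal, abs_of_pos (hd0 y)]
      by_cases hy : ‖h y‖ ≤ ε / 2
      · have h1 : (1:ℝ) ≤ T * s y + 1 := by
          have := mul_nonneg hT0 (hsnonneg y); linarith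
        calc ‖h y‖ / (T * s y + 1) ≤ ‖h y‖ / 1 :=
              div_le_div_of_nonneg_left (norm_nonneg _) one_pos h1 |>.trans_eq rfl
          _ ≤ ε / 2 := by simpa using hy
      · push_neg at hy
        have hyK : stoneCechUnit y ∈ K := by
          rw [hKdef]
          simp only [mem_setOf_eq, betaExt_unit]
          exact hy.le
        have hsc : c ≤ s y := hcK _ hyK
        have hTc : T * c + 1 ≤ T * s y + 1 := by nlinarith
        calc ‖h y‖ / (T * s y + 1) ≤ ‖h‖ / (T * c + 1) := by
              apply div_le_div₀ (norm_nonneg h) (h.norm_coe_le_norm y) (by nlinarith) hTc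
          _ ≤ ε / 2 := by
              rw [div_le_iff₀ (by nlinarith)]
              have : T * c = ‖h‖ / (ε / 2) := by
                rw [hTdef]; field_simp
              rw [this]
              have h3 : ε / 2 * (‖h‖ / (ε / 2)) = ‖h‖ := by
                field_simp
              rw [mul_add, h3]
              linarith
    linarith [hbound]
  rwa [hc.closure_eq] at this



/-- The continuous extension `f_β : βX → βY` of a continuous map `f : X → Y`. -/
noncomputable def stoneCechMap {X Y : Type*} [TopologicalSpace X] [TopologicalSpace Y]
    {f : X → Y} (hf : Continuous f) : StoneCech X → StoneCech Y :=
  stoneCechExtend (continuous_stoneCechUnit.comp hf)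

section Phi

variable {X Y : Type*} [TopologicalSpace X] [TopologicalSpace Y] {𝕜 : Type*} [RCLike 𝕜]

theorem stoneCechMap_unit {f : X → Y} (hf : Continuous f) (x : X) :
    stoneCechMap hf (stoneCechUnit x) = stoneCechUnit (f x) :=
  congrFun (stoneCechExtend_extends (continuous_stoneCechUnit.comp hf)) x

theorem continuous_stoneCechMap {f : X → Y} (hf : Continuous f) :
    Continuous (stoneCechMap hf) :=
  continuous_stoneCechExtend _

theorem betaExt_comp {f : X → Y} (hf : Continuous f) (g : Y →ᵇ 𝕜) :
    betaExt (g.compContinuous ⟨f, hf⟩) = betaExt g ∘ stoneCechMap hf :=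
  betaExt_unique ((continuous_betaExt g).comp (continuous_stoneCechMap hf))
    (fun x => by
      simp [Function.comp, stoneCechMap_unit hf x, betaExt_unit])

theorem lambdaSet_mono {H H' : Ideal (X →ᵇ 𝕜)} (hle : H ≤ H') :
    lambdaSet H ⊆ lambdaSet (𝕜 := 𝕜) H' := by
  intro p hp
  rcases mem_iUnion₂.mp hp with ⟨g, hg, hgp⟩
  exact mem_biUnion (hle hg) hgp

variable (𝕜) in
def pullIdeal (U : Set (StoneCech X)) : Ideal (X →ᵇ 𝕜) where
  carrier := {h | {p | betaExt h p ≠ 0} ⊆ U}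
  zero_mem' := by intro p hp; simp [betaExt_zero] at hp
  add_mem' := by
    intro a b ha hb p hp
    simp only [mem_setOf_eq, betaExt_add, Pi.add_apply] at hp
    by_cases h1 : betaExt a p = 0
    · exact hb (by simpa [h1] using hp)
    · exact ha h1
  smul_mem' := by
    intro c a ha p hp
    apply ha
    simp only [smul_eq_mul, mem_setOf_eq, betaExt_mul, Pi.mul_apply] at hp
    exact fun e => hp (by simp [e])

theorem mem_pullIdeal {U : Set (StoneCech X)} {h : X →ᵇ 𝕜} :
    h ∈ pullIdeal 𝕜 U ↔ {p | betaExt h p ≠ 0} ⊆ U := Iff.rfl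

theorem isClosed_pullIdeal (U : Set (StoneCech X)) :
    IsClosed (pullIdeal 𝕜 U : Set (X →ᵇ 𝕜)) := by
  rw [← closure_subset_iff_isClosed]
  intro h hh p hp
  have hε : 0 < ‖betaExt h p‖ := norm_pos_iff.mpr hp
  obtain ⟨b, hbmem, hbd⟩ := Metric.mem_closure_iff.mp hh _ hε
  have hb0 : betaExt b p ≠ 0 := by
    intro e
    have h1 : ‖betaExt h p - betaExt b p‖ ≤ ‖h - b‖ := by
      have := betaExt_norm_le (h - b) p
      rwa [betaExt_sub] at this
    rw [e, sub_zero] at h1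
    rw [dist_eq_norm] at hbd
    linarith
  exact hbmem hb0

theorem lambdaSet_pullIdeal {f : X → Y} (hf : Continuous f) (H : Ideal (Y →ᵇ 𝕜))
    (hnv : ∀ y : Y, ∃ g ∈ H, g y ≠ 0) :
    lambdaSet (pullIdeal 𝕜 (stoneCechMap hf ⁻¹' lambdaSet H)) =
      stoneCechMap hf ⁻¹' lambdaSet H := by
  apply subset_antisymm
  · exact iUnion₂_subset fun h hh => hh
  · intro p hp
    rcases mem_iUnion₂.mp hp with ⟨g, hg, hgp⟩
    have hmem : g.compContinuous ⟨f, hf⟩ ∈ pullIdeal 𝕜 (stoneCechMap hf ⁻¹' lambdaSet H) := by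
      intro p' hp'
      rw [mem_setOf_eq, betaExt_comp hf g] at hp'
      exact mem_biUnion hg hp'
    refine mem_biUnion hmem ?_
    rw [mem_setOf_eq, betaExt_comp hf g]
    exact hgp

end Phi

/-- A continuous map `f : X → Y` of Tychonoff spaces induces a (contravariant)
order-homomorphism `φ : ℋ(Y) → ℋ(X)` (defined via `λ_{φ(H)} X = f_β⁻¹(λ_H Y)`), which is
injective whenever `f` is surjective. -/
theorem induced_order_hom {X : Type*} {Y : Type*} [TopologicalSpace X] [T35Space X]
    [TopologicalSpace Y] [T35Space Y] (𝕜 : Type*) [RCLike 𝕜]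
    (f : X → Y) (hf : Continuous f) :
    ∃ φ : {H : Ideal (Y →ᵇ 𝕜) //
            IsClosed (H : Set (Y →ᵇ 𝕜)) ∧ ∀ y : Y, ∃ g ∈ H, g y ≠ 0} →
          {H : Ideal (X →ᵇ 𝕜) //
            IsClosed (H : Set (X →ᵇ 𝕜)) ∧ ∀ x : X, ∃ g ∈ H, g x ≠ 0},
      Monotone φ ∧
      (∀ H, lambdaSet (φ H).1 = stoneCechMap hf ⁻¹' lambdaSet H.1) ∧
      (Function.Surjective f → Function.Injective φ) := by
  refine ⟨fun H => ⟨pullIdeal 𝕜 (stoneCechMap hf ⁻¹' lambdaSet H.1),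
      isClosed_pullIdeal _, ?_⟩, ?_, ?_, ?_⟩
  · -- non-vanishing
    intro x
    obtain ⟨g, hg, hgx⟩ := H.2.2 (f x)
    refine ⟨g.compContinuous ⟨f, hf⟩, ?_, ?_⟩
    · intro p hp
      rw [mem_setOf_eq, betaExt_comp hf g] at hp
      exact mem_biUnion hg hp
    · simpa using hgx
  · -- monotone
    intro H H' hle
    show pullIdeal 𝕜 _ ≤ pullIdeal 𝕜 _
    intro h hh p hp
    exact preimage_mono (lambdaSet_mono hle) (hh hp)
  · -- lambda property
    intro H
    exact lambdaSet_pullIdeal hf H.1 H.2.2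
  · -- injectivity
    intro hfs H H' heq
    have hsurj : Function.Surjective (stoneCechMap hf) := by
      rw [← Set.range_eq_univ]
      have hclosed : IsClosed (Set.range (stoneCechMap hf)) :=
        (isCompact_range (continuous_stoneCechMap hf)).isClosed
      have hsub : Set.range (stoneCechUnit : Y → StoneCech Y) ⊆
          Set.range (stoneCechMap hf) := by
        rintro _ ⟨y, rfl⟩
        obtain ⟨x, rfl⟩ := hfs y
        exact ⟨stoneCechUnit x, stoneCechMap_unit hf x⟩
      have hdense : Dense (Set.range (stoneCechMap hf)) :=
        denseRange_stoneCechUnit.mono hsub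
      rw [← hclosed.closure_eq]
      exact hdense.closure_eq
    have e1 : stoneCechMap hf ⁻¹' lambdaSet H.1 = stoneCechMap hf ⁻¹' lambdaSet H'.1 := by
      rw [← lambdaSet_pullIdeal hf H.1 H.2.2, ← lambdaSet_pullIdeal hf H'.1 H'.2.2]
      have : (pullIdeal 𝕜 (stoneCechMap hf ⁻¹' lambdaSet H.1)) =
          (pullIdeal 𝕜 (stoneCechMap hf ⁻¹' lambdaSet H'.1)) :=
        congrArg Subtype.val heq
      rw [this]
    have e2 : lambdaSet H.1 = lambdaSet (𝕜 := 𝕜) H'.1 := hsurj.preimage_injective e1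
    exact Subtype.ext (le_antisymm
      (le_of_lambdaSet_subset H'.2.1 e2.le)
      (le_of_lambdaSet_subset H.2.1 e2.ge))
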